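/- arXiv:2205.10198 — 3 statements merged into one kernel-verified Lean document; each statement's English description precedes it below -/
import Mathlib

section
/- Let x₁,…,x_n be i.i.d. N(0, (1/n)·I_p) with p/n → κ ∈ (0, 1/2), and z₁,…,z_n i.i.d. N(0, 1/n) independent of the xᵢ. Then (Σᵢ (1/√n)xᵢ)ᵀ(Σᵢxᵢxᵢᵀ)^{-1}(Σᵢzᵢxᵢ) converges in probability to 0. -/
open MeasureTheory ProbabilityTheory Matrix Filter

/-!
Condition on the design `X`. The cross term is then the linear form `∑ i, cᵢ(X) zᵢ` in the
independent `N(0, 1/n)` noise, with `cᵢ = uᵀ A⁻¹ xᵢ`, `u = ∑ xᵢ / √n`, `A = ∑ xᵢ xᵢᵀ`.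
Writing `w = A⁻¹ u`, one has `∑ cᵢ² = wᵀ A w = wᵀ u = ∑ (w ⬝ xᵢ) / √n`, so Cauchy–Schwarz gives
`∑ cᵢ² ≤ 1` whatever `X` is. Hence the conditional variance is at most `1/n`, and
Chebyshev's inequality, integrated over `X`, bounds the tail probability by `1 / (n ε²)`.
-/

section Gram
variable {ι m R : Type*} [Fintype ι]

lemma isSymm_sum_vecMulVec_self [CommRing R] (x : ι → m → R) :
    (∑ i, vecMulVec (x i) (x i)).IsSymm := by
  simp [IsSymm, transpose_sum, transpose_vecMulVec]

variable [Fintype m]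

lemma dotProduct_mulVec_sum_smul [CommRing R] (u : m → R) (B : Matrix m m R) (z : ι → R)
    (x : ι → m → R) :
    u ⬝ᵥ (B *ᵥ ∑ i, z i • x i) = ∑ i, (u ⬝ᵥ (B *ᵥ x i)) * z i := by
  simp [mulVec_sum, mulVec_smul, dotProduct_sum, dotProduct_smul, mul_comm]

lemma sum_sq_dotProduct_eq_dotProduct_mulVec [CommRing R] (x : ι → m → R) (w : m → R) :
    ∑ i, (w ⬝ᵥ x i) ^ 2 = w ⬝ᵥ ((∑ i, vecMulVec (x i) (x i)) *ᵥ w) := by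
  simp [sum_mulVec, vecMulVec_mulVec, dotProduct_sum, dotProduct_smul, dotProduct_comm (x _) w, sq]

variable [DecidableEq m]

theorem sum_sq_dotProduct_inv_gram_mulVec_le (x : ι → m → ℝ) (a : ι → ℝ) :
    ∑ i, ((∑ j, a j • x j) ⬝ᵥ ((∑ j, vecMulVec (x j) (x j))⁻¹ *ᵥ x i)) ^ 2 ≤ ∑ i, a i ^ 2 := by
  set A := ∑ j, vecMulVec (x j) (x j)
  set u := ∑ j, a j • x j
  by_cases hA : IsUnit A.det
  swap
  -- a singular `A` has junk inverse `0`
  · simpa [nonsing_inv_apply_not_isUnit A hA] using Finset.sum_nonneg fun i _ => sq_nonneg (a i)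
  set w := A⁻¹ *ᵥ u
  have hw : ∀ i, u ⬝ᵥ (A⁻¹ *ᵥ x i) = w ⬝ᵥ x i := fun i => by
    rw [dotProduct_mulVec, ← mulVec_transpose, (isSymm_sum_vecMulVec_self x).inv.eq, dotProduct_comm]
  set t := ∑ i, (w ⬝ᵥ x i) ^ 2
  have ht : t = ∑ i, a i * (w ⬝ᵥ x i) := calc
    t = w ⬝ᵥ (A *ᵥ w) := sum_sq_dotProduct_eq_dotProduct_mulVec x w
    _ = w ⬝ᵥ u := by rw [mulVec_mulVec, mul_nonsing_inv A hA, one_mulVec]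
    _ = ∑ i, a i * (w ⬝ᵥ x i) := by simp [u, dotProduct_sum, dotProduct_smul]
  have hCS : t ^ 2 ≤ (∑ i, a i ^ 2) * t := calc
    t ^ 2 = (∑ i, a i * (w ⬝ᵥ x i)) ^ 2 := by rw [ht]
    _ ≤ (∑ i, a i ^ 2) * t := Finset.sum_mul_sq_le_sq_mul_sq Finset.univ a fun i => w ⬝ᵥ x i
  have ht0 : 0 ≤ t := Finset.sum_nonneg fun i _ => sq_nonneg _
  simp only [hw]
  nlinarith [Finset.sum_nonneg fun i (_ : i ∈ Finset.univ) => sq_nonneg (a i)]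

end Gram

section LinearFormOfGaussians
variable {ι : Type*} [Fintype ι] (v : NNReal) (c : ι → ℝ)

lemma memLp_sum_mul_pi_gaussianReal (p : NNReal) :
    MemLp (fun z => ∑ i, c i * z i) p (Measure.pi fun _ : ι => gaussianReal 0 v) :=
  memLp_finsetSum _ fun i _ =>
    ((memLp_id_gaussianReal p).comp_measurePreserving (measurePreserving_eval _ i)).const_mul (c i)

lemma integral_sum_mul_pi_gaussianReal :
    ∫ z, ∑ i, c i * z i ∂(Measure.pi fun _ : ι => gaussianReal 0 v) = 0 := by
  rw [integral_finsetSum (f := fun i (z : ι → ℝ) => c i * z i) _ fun i _ =>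
    (((memLp_id_gaussianReal 1).comp_measurePreserving (measurePreserving_eval _ i)).integrable
      le_rfl).const_mul (c i)]
  simp [integral_const_mul, integral_eval, integral_id_gaussianReal]

lemma variance_sum_mul_pi_gaussianReal :
    Var[fun z => ∑ i, c i * z i; Measure.pi fun _ : ι => gaussianReal 0 v]
      = v * ∑ i, c i ^ 2 := by
  have h := variance_sum_pi (μ := fun _ : ι => gaussianReal 0 v) (X := fun i x => c i * x)
    fun i => (memLp_id_gaussianReal 2).const_mul (c i)
  rw [Finset.mul_sum]
  convert h using 2 with i
  · ext z; simp
  · rw [variance_const_mul, variance_fun_id_gaussianReal, mul_comm]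

lemma measure_lt_abs_sum_mul_pi_gaussianReal_le {ε : ℝ} (hε : 0 < ε) :
    (Measure.pi fun _ : ι => gaussianReal 0 v) {z | ε < |∑ i, c i * z i|}
      ≤ ENNReal.ofReal (v * (∑ i, c i ^ 2) / ε ^ 2) := calc
  (Measure.pi fun _ : ι => gaussianReal 0 v) {z | ε < |∑ i, c i * z i|}
      ≤ (Measure.pi fun _ : ι => gaussianReal 0 v) {z | ε ≤ |∑ i, c i * z i|} :=
    measure_mono <| Set.ofPred_subset_ofPred.2 fun _ => le_of_lt
  _ ≤ _ := by
    simpa [integral_sum_mul_pi_gaussianReal, variance_sum_mul_pi_gaussianReal] using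
      meas_ge_le_variance_div_sq (memLp_sum_mul_pi_gaussianReal v c 2) hε

end LinearFormOfGaussians

lemma Continuous.measurable_dotProduct_inv_mulVec {α m : Type*} [TopologicalSpace α]
    [MeasurableSpace α] [OpensMeasurableSpace α] [Fintype m] [DecidableEq m]
    {u w : α → m → ℝ} {A : α → Matrix m m ℝ} (hu : Continuous u) (hA : Continuous A)
    (hw : Continuous w) :
    Measurable fun a => u a ⬝ᵥ ((A a)⁻¹ *ᵥ w a) := by
  simp_rw [inv_def, smul_mulVec, dotProduct_smul, Ring.inverse_eq_inv', smul_eq_mul]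
  exact hA.matrix_det.measurable.inv.mul
    (hu.dotProduct (hA.matrix_adjugate.matrix_mulVec hw)).measurable

noncomputable def crossTerm {n q : ℕ} (z : Fin n → ℝ) (X : Fin n → Fin q → ℝ) : ℝ :=
  (∑ i, (1 / Real.sqrt n) • X i) ⬝ᵥ ((∑ i, vecMulVec (X i) (X i))⁻¹ *ᵥ ∑ i, z i • X i)

lemma measurable_crossTerm (n q : ℕ) :
    Measurable fun ω : (Fin n → ℝ) × (Fin n → Fin q → ℝ) => crossTerm ω.1 ω.2 := by
  have hX : ∀ i, Continuous fun ω : (Fin n → ℝ) × (Fin n → Fin q → ℝ) => ω.2 i :=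
    fun i => by fun_prop
  exact Continuous.measurable_dotProduct_inv_mulVec (by fun_prop)
    (continuous_finsetSum _ fun i _ => (hX i).matrix_vecMulVec (hX i)) (by fun_prop)

lemma sum_sq_crossTerm_coeff_le_one {n q : ℕ} (X : Fin n → Fin q → ℝ) :
    ∑ i, ((∑ j, (1 / Real.sqrt n) • X j) ⬝ᵥ ((∑ j, vecMulVec (X j) (X j))⁻¹ *ᵥ X i)) ^ 2 ≤ 1 :=
  calc _ ≤ ∑ _ : Fin n, (1 / Real.sqrt n) ^ 2 := sum_sq_dotProduct_inv_gram_mulVec_le X _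
    _ ≤ 1 := by
      rcases Nat.eq_zero_or_pos n with rfl | hn
      · simp
      · simp [Real.sq_sqrt, hn.ne']

lemma measure_lt_abs_crossTerm_le (n q : ℕ) {ε : ℝ} (hε : 0 < ε) :
    ((Measure.pi fun _ : Fin n => gaussianReal 0 (n : NNReal)⁻¹).prod
      (Measure.pi fun _ : Fin n => Measure.pi fun _ : Fin q => gaussianReal 0 (n : NNReal)⁻¹))
      {ω | ε < |crossTerm ω.1 ω.2|} ≤ ENNReal.ofReal ((n : ℝ)⁻¹ / ε ^ 2) := by
  rw [Measure.prod_apply_symm (measurableSet_lt measurable_const (measurable_crossTerm n q).abs)]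
  refine (lintegral_mono (g := fun _ => ENNReal.ofReal ((n : ℝ)⁻¹ / ε ^ 2)) fun X => ?_).trans_eq
    (by simp)
  simp only [Set.preimage_ofPred_eq, crossTerm, dotProduct_mulVec_sum_smul]
  refine (measure_lt_abs_sum_mul_pi_gaussianReal_le _ _ hε).trans (ENNReal.ofReal_le_ofReal ?_)
  have hc := sum_sq_crossTerm_coeff_le_one X
  gcongr
  push_cast
  exact mul_le_of_le_one_right (by positivity) hc

theorem gram_cross_term_limit_general (p : ℕ → ℕ) :
    ∀ ε > (0 : ℝ),
      Tendsto (fun n =>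
          ((Measure.pi fun _ : Fin n => gaussianReal 0 (n : NNReal)⁻¹).prod
            (Measure.pi fun _ : Fin n =>
              (Measure.pi fun _ : Fin (p n) => gaussianReal 0 (n : NNReal)⁻¹)))
            {ω : (Fin n → ℝ) × (Fin n → Fin (p n) → ℝ) |
              ε < |(∑ i, (1 / Real.sqrt n) • ω.2 i) ⬝ᵥ
                ((∑ i, vecMulVec (ω.2 i) (ω.2 i))⁻¹ *ᵥ (∑ i, ω.1 i • ω.2 i))|})
        atTop (nhds (0 : ENNReal)) := by
  intro ε hε
  have hbound : Tendsto (fun n : ℕ => ENNReal.ofReal ((n : ℝ)⁻¹ / ε ^ 2)) atTop (nhds 0) := by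
    simpa using ENNReal.tendsto_ofReal
      ((tendsto_inv_atTop_zero.comp tendsto_natCast_atTop_atTop).div_const (ε ^ 2))
  exact tendsto_of_tendsto_of_tendsto_of_le_of_le tendsto_const_nhds hbound (fun _ => zero_le)
    fun n => measure_lt_abs_crossTerm_le n (p n) hε

/-- For `x₁, …, x_n` i.i.d. `N(0, (1/n) I_p)` with `p/n → κ ∈ (0, 1/2)` and independent
`z₁, …, z_n` i.i.d. `N(0, 1/n)`,
`(Σᵢ (1/√n) xᵢ)ᵀ (Σᵢ xᵢxᵢᵀ)⁻¹ (Σᵢ zᵢxᵢ) → 0` in probability. -/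
theorem gram_cross_term_limit (p : ℕ → ℕ) (κ : ℝ) (hκ : 0 < κ) (hκ' : κ < 1 / 2)
    (hp : Tendsto (fun n => (p n : ℝ) / n) atTop (nhds κ)) :
    ∀ ε > (0 : ℝ),
      Tendsto (fun n =>
          ((Measure.pi fun _ : Fin n => gaussianReal 0 (n : NNReal)⁻¹).prod
            (Measure.pi fun _ : Fin n =>
              (Measure.pi fun _ : Fin (p n) => gaussianReal 0 (n : NNReal)⁻¹)))
            {ω : (Fin n → ℝ) × (Fin n → Fin (p n) → ℝ) |
              ε < |(∑ i, (1 / Real.sqrt n) • ω.2 i) ⬝ᵥ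
                ((∑ i, vecMulVec (ω.2 i) (ω.2 i))⁻¹ *ᵥ (∑ i, ω.1 i • ω.2 i))|})
        atTop (nhds (0 : ENNReal)) :=
  gram_cross_term_limit_general p
end

section
/- Let x ∈ ℝ^p have i.i.d. N(0, 1/n) entries, β ∈ ℝ^p a fixed vector, and A | x ~ Bernoulli(σ(xᵀβ)). Then the random matrix xxᵀ has the same distribution as the conditional distribution of xxᵀ given A = a, for each a ∈ {0,1}. -/
/-!
The sign flip `x ↦ -x` preserves the centred Gaussian law and changes `xᵀβ` into `-xᵀβ`, so it
exchanges the weights `σ(xᵀβ)` and `1 - σ(xᵀβ)`; hence the weights at `x` and `-x` always add up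
to `1`. On events invariant under the flip, such as every event about `x xᵀ`, the weighted law is
therefore exactly half the Gaussian law; normalising by the total mass `1/2` gives the Gaussian law.
-/

open MeasureTheory ProbabilityTheory Matrix

open scoped ENNReal NNReal

/-- The logistic sigmoid function. -/
noncomputable def sig (t : ℝ) : ℝ := 1 / (1 + Real.exp (-t))

lemma sig_eq_sigmoid : sig = Real.sigmoid := by
  funext t
  rw [sig, Real.sigmoid_def, one_div]

lemma ofReal_sigmoid_add_ofReal_one_sub_sigmoid (t : ℝ) :
    ENNReal.ofReal (Real.sigmoid t) + ENNReal.ofReal (1 - Real.sigmoid t) = 1 := by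
  rw [← ENNReal.ofReal_add (Real.sigmoid_nonneg t) (sub_nonneg.2 (Real.sigmoid_le_one t)),
    add_sub_cancel, ENNReal.ofReal_one]

lemma measurePreserving_neg_pi_gaussianReal (ι : Type*) [Fintype ι] (v : ℝ≥0) :
    MeasurePreserving (fun x : ι → ℝ => -x)
      (Measure.pi fun _ => gaussianReal 0 v) (Measure.pi fun _ => gaussianReal 0 v) :=
  measurePreserving_pi (f := fun _ t => -t) _ _ fun _ =>
    ⟨measurable_neg, by rw [gaussianReal_map_neg, neg_zero]⟩

section ComplementaryWeights

variable {X Y : Type*} [MeasurableSpace X] [MeasurableSpace Y] {μ : Measure X} {g : X → X}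
  {w : X → ℝ≥0∞}

lemma withDensity_apply_of_add_comp_eq_one (hg : MeasurePreserving g μ μ)
    (hw : Measurable w) (hwg : ∀ x, w x + w (g x) = 1) {T : Set X} (hT : MeasurableSet T)
    (hTg : g ⁻¹' T = T) : μ.withDensity w T = 2⁻¹ * μ T := by
  have hswap : ∫⁻ x in T, w (g x) ∂μ = ∫⁻ x in T, w x ∂μ := by
    simpa only [hTg] using hg.setLIntegral_comp_preimage hT hw
  have htwice : 2 * ∫⁻ x in T, w x ∂μ = μ T := calc
    2 * ∫⁻ x in T, w x ∂μ = ∫⁻ x in T, w x ∂μ + ∫⁻ x in T, w (g x) ∂μ := by rw [two_mul, hswap]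
    _ = ∫⁻ x in T, (w x + w (g x)) ∂μ := (lintegral_add_left hw _).symm
    _ = μ T := by simp only [hwg, setLIntegral_one]
  rw [withDensity_apply w hT, ← htwice, ← mul_assoc,
    ENNReal.inv_mul_cancel two_ne_zero ENNReal.ofNat_ne_top, one_mul]

lemma map_withDensity_of_add_comp_eq_one (hg : MeasurePreserving g μ μ)
    (hw : Measurable w) (hwg : ∀ x, w x + w (g x) = 1) {f : X → Y} (hf : Measurable f)
    (hfg : f ∘ g = f) : (μ.withDensity w).map f = (2⁻¹ : ℝ≥0∞) • μ.map f := by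
  ext S hS
  rw [Measure.map_apply hf hS, Measure.smul_apply, Measure.map_apply hf hS, smul_eq_mul]
  refine withDensity_apply_of_add_comp_eq_one hg hw hwg (hf hS) ?_
  rw [← Set.preimage_comp, hfg]

end ComplementaryWeights

theorem gram_independent_of_treatment_general (n p : ℕ) (β : Fin p → ℝ) :
    ∀ a : Bool,
      Measure.map (fun (x : Fin p → ℝ) (i j : Fin p) => x i * x j)
        ((Measure.pi fun _ : Fin p => gaussianReal 0 (n : NNReal)⁻¹).withDensity
          (fun x => ENNReal.ofReal
            (if a then sig (∑ i, x i * β i) else 1 - sig (∑ i, x i * β i))))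
      = ((Measure.pi fun _ : Fin p => gaussianReal 0 (n : NNReal)⁻¹).withDensity
          (fun x => ENNReal.ofReal
            (if a then sig (∑ i, x i * β i) else 1 - sig (∑ i, x i * β i)))) Set.univ
        • Measure.map (fun (x : Fin p → ℝ) (i j : Fin p) => x i * x j)
            (Measure.pi fun _ : Fin p => gaussianReal 0 (n : NNReal)⁻¹) := by
  intro a
  set w : (Fin p → ℝ) → ℝ≥0∞ := fun x => ENNReal.ofReal
    (if a then sig (∑ i, x i * β i) else 1 - sig (∑ i, x i * β i))
  have hneg := measurePreserving_neg_pi_gaussianReal (Fin p) (n : ℝ≥0)⁻¹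
  have hw : Measurable w := by
    cases a <;> simp only [w, sig_eq_sigmoid, Bool.false_eq_true, if_true, if_false] <;> fun_prop
  have hwneg (x : Fin p → ℝ) : w x + w (-x) = 1 := by
    simp only [w, Pi.neg_apply, neg_mul, Finset.sum_neg_distrib, sig_eq_sigmoid,
      Real.sigmoid_neg, sub_sub_cancel]
    cases a
    · exact (add_comm _ _).trans (ofReal_sigmoid_add_ofReal_one_sub_sigmoid _)
    · exact ofReal_sigmoid_add_ofReal_one_sub_sigmoid _
  have hgram_neg : (fun (x : Fin p → ℝ) (i j : Fin p) => x i * x j) ∘ (fun x => -x) =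
      fun x i j => x i * x j := by
    funext x i j
    exact neg_mul_neg (x i) (x j)
  rw [map_withDensity_of_add_comp_eq_one hneg hw hwneg (by fun_prop) hgram_neg,
    withDensity_apply_of_add_comp_eq_one hneg hw hwneg MeasurableSet.univ rfl,
    measure_univ, mul_one]

/-- For `x` with i.i.d. `N(0,1/n)` entries and `A | x ~ Bernoulli(σ(xᵀβ))`, the matrix
`x xᵀ` (viewed as the function `(i,j) ↦ xᵢ xⱼ`) is distributed as `(x xᵀ | A = a)` for each `a ∈ {0,1}`: the conditional law of
`x xᵀ` given `A = a` (i.e. the `σ(xᵀβ)`- resp. `(1-σ(xᵀβ))`-weighted law, normalized by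
its total mass) coincides with the unconditional law of `x xᵀ`. -/
theorem gram_independent_of_treatment (n p : ℕ) (hn : 0 < n) (β : Fin p → ℝ) :
    ∀ a : Bool,
      Measure.map (fun (x : Fin p → ℝ) (i j : Fin p) => x i * x j)
        ((Measure.pi fun _ : Fin p => gaussianReal 0 (n : NNReal)⁻¹).withDensity
          (fun x => ENNReal.ofReal
            (if a then sig (∑ i, x i * β i) else 1 - sig (∑ i, x i * β i))))
      = ((Measure.pi fun _ : Fin p => gaussianReal 0 (n : NNReal)⁻¹).withDensity
          (fun x => ENNReal.ofReal
            (if a then sig (∑ i, x i * β i) else 1 - sig (∑ i, x i * β i)))) Set.univ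
        • Measure.map (fun (x : Fin p → ℝ) (i j : Fin p) => x i * x j)
            (Measure.pi fun _ : Fin p => gaussianReal 0 (n : NNReal)⁻¹) :=
  gram_independent_of_treatment_general n p β
end

section
/- Suppose p/n → κ > 0. Let x ~ N(0, (1/n)I_p) and let β(n), ξ(n) ∈ ℝ^p be deterministic sequences with ‖β‖²/n → γ² and ‖ξ‖²/n → γ̂². Then the family of random variables { (1+e^{-xᵀξ})² / (1+e^{-xᵀβ}) }_{n∈ℕ} is uniformly integrable. -/
/-!
On `{F ≥ C}` one has `F ≤ F² / C`, and since the denominator is at least `1`,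
`F² ≤ (1 + e^{-xᵀξ})⁴ ≤ 8 (1 + e^{-4 xᵀξ})`. As `xᵀξ ~ N(0, ‖ξ‖²/n)`, the expectation of the
right-hand side is `8 (1 + e^{8 ‖ξ‖²/n})`, which is bounded in `n` because `‖ξ‖²/n` converges.
So the integral of `F` over `{F ≥ C}` is at most a constant independent of `n`, divided by `C`.
-/

open MeasureTheory ProbabilityTheory Filter Real
open scoped NNReal

lemma integral_exp_mul_gaussianReal (μ : ℝ) (v : ℝ≥0) (t : ℝ) :
    ∫ x, rexp (t * x) ∂gaussianReal μ v = rexp (μ * t + v * t ^ 2 / 2) :=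
  congrFun mgf_id_gaussianReal t

section Pi

variable {ι : Type*} [Fintype ι]

lemma exp_mul_sum_mul_eq_prod (a x : ι → ℝ) (t : ℝ) :
    rexp (t * ∑ i, x i * a i) = ∏ i, rexp (t * a i * x i) := by
  rw [← Real.exp_sum, Finset.mul_sum]
  congr! 2
  ring

lemma integrable_exp_mul_sum_pi_gaussianReal (v : ℝ≥0) (a : ι → ℝ) (t : ℝ) :
    Integrable (fun x : ι → ℝ => rexp (t * ∑ i, x i * a i))
      (Measure.pi fun _ => gaussianReal 0 v) := by
  simp_rw [exp_mul_sum_mul_eq_prod]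
  exact Integrable.fintype_prod fun i => integrable_exp_mul_gaussianReal (t * a i)

lemma integral_exp_mul_sum_pi_gaussianReal (v : ℝ≥0) (a : ι → ℝ) (t : ℝ) :
    ∫ x, rexp (t * ∑ i, x i * a i) ∂(Measure.pi fun _ => gaussianReal 0 v)
      = rexp (v * (∑ i, a i ^ 2) * t ^ 2 / 2) := by
  simp_rw [exp_mul_sum_mul_eq_prod, integral_fintype_prod_eq_prod (fun i y => rexp (t * a i * y)),
    integral_exp_mul_gaussianReal, ← Real.exp_sum, Finset.mul_sum, Finset.sum_mul, Finset.sum_div]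
  congr! 2 with i
  ring

end Pi

lemma setIntegral_le_integral_div_of_sq_le {α : Type*} [MeasurableSpace α] {μ : Measure α}
    {f g : α → ℝ} (hf : Measurable f) (hg : Integrable g μ) (hfg : ∀ x, f x ^ 2 ≤ g x)
    {C : ℝ} (hC : 0 < C) :
    ∫ x in {x | C ≤ f x}, f x ∂μ ≤ (∫ x, g x ∂μ) / C := by
  have hS : MeasurableSet {x | C ≤ f x} := measurableSet_le measurable_const hf
  have hgC : Integrable (fun x => g x / C) μ := hg.div_const C
  -- `f ≤ f ^ 2 / C ≤ g / C` on `{C ≤ f}`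
  have hle : ∀ x ∈ {x | C ≤ f x}, f x ≤ g x / C := fun x (hx : C ≤ f x) => by
    rw [le_div_iff₀ hC]
    nlinarith [hfg x]
  have hfS : IntegrableOn f {x | C ≤ f x} μ := by
    refine hgC.integrableOn.mono' hf.aestronglyMeasurable.restrict ?_
    refine (ae_restrict_iff' hS).2 (Eventually.of_forall fun x hx => ?_)
    rw [norm_of_nonneg (hC.le.trans hx)]
    exact hle x hx
  calc ∫ x in {x | C ≤ f x}, f x ∂μ ≤ ∫ x in {x | C ≤ f x}, g x / C ∂μ :=
        setIntegral_mono_on hfS hgC.integrableOn hS hle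
    _ ≤ ∫ x, g x / C ∂μ :=
        setIntegral_le_integral hgC (Eventually.of_forall fun x =>
          div_nonneg ((sq_nonneg _).trans (hfg x)) hC.le)
    _ = (∫ x, g x ∂μ) / C := integral_div C g

lemma one_add_pow_four_le (y : ℝ) : (1 + y) ^ 4 ≤ 8 * (1 + y ^ 4) := by
  nlinarith [sq_nonneg (y - 1), sq_nonneg (y + 1), sq_nonneg (y ^ 2 - 1)]

lemma sigmoid_ratio_sq_le (u w : ℝ) :
    ((1 + rexp (-u)) ^ 2 / (1 + rexp (-w))) ^ 2 ≤ 8 * (1 + rexp (-4 * u)) := by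
  have hden : 1 ≤ (1 + rexp (-w)) ^ 2 := one_le_pow₀ (le_add_of_nonneg_right (exp_pos _).le)
  calc ((1 + rexp (-u)) ^ 2 / (1 + rexp (-w))) ^ 2
      = (1 + rexp (-u)) ^ 4 / (1 + rexp (-w)) ^ 2 := by rw [div_pow, ← pow_mul]
    _ ≤ (1 + rexp (-u)) ^ 4 := div_le_self (by positivity) hden
    _ ≤ 8 * (1 + rexp (-u) ^ 4) := one_add_pow_four_le _
    _ = 8 * (1 + rexp (-4 * u)) := by rw [← exp_nat_mul]; ring_nf

theorem uniform_integrability_sigmoid_ratio_general (p : ℕ → ℕ)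
    (β ξ : (n : ℕ) → Fin (p n) → ℝ) (γh : ℝ)
    (hξ : Tendsto (fun n => (∑ i, (ξ n i) ^ 2) / n) atTop (nhds (γh ^ 2))) :
    ∀ ε > (0 : ℝ), ∃ C : ℝ, ∀ n : ℕ,
      ∫ x in {x : Fin (p n) → ℝ |
            C ≤ (1 + Real.exp (-(∑ i, x i * ξ n i))) ^ 2
                / (1 + Real.exp (-(∑ i, x i * β n i)))},
          (1 + Real.exp (-(∑ i, x i * ξ n i))) ^ 2 / (1 + Real.exp (-(∑ i, x i * β n i)))
          ∂(Measure.pi fun _ : Fin (p n) => gaussianReal 0 (n : NNReal)⁻¹) ≤ ε := by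
  obtain ⟨M, hM⟩ := hξ.bddAbove_range
  intro ε hε
  refine ⟨8 * (1 + rexp (8 * M)) / ε, fun n => ?_⟩
  have hint := integrable_exp_mul_sum_pi_gaussianReal (n : ℝ≥0)⁻¹ (ξ n) (-4)
  have hdom : Integrable (fun x => 8 * (1 + rexp (-4 * ∑ i, x i * ξ n i)))
      (Measure.pi fun _ : Fin (p n) => gaussianReal 0 (n : ℝ≥0)⁻¹) :=
    ((integrable_const 1).add hint).const_mul 8
  have hmoment : ∫ x, 8 * (1 + rexp (-4 * ∑ i, x i * ξ n i))
      ∂(Measure.pi fun _ : Fin (p n) => gaussianReal 0 (n : ℝ≥0)⁻¹) ≤ 8 * (1 + rexp (8 * M)) := by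
    rw [integral_const_mul, integral_add (integrable_const 1) hint,
      integral_exp_mul_sum_pi_gaussianReal]
    gcongr
    · simp
    · have hvar : (∑ i, ξ n i ^ 2) / n ≤ M := hM ⟨n, rfl⟩
      push_cast
      linarith [inv_mul_eq_div (n : ℝ) (∑ i, ξ n i ^ 2)]
  calc _ ≤ 8 * (1 + rexp (8 * M)) / (8 * (1 + rexp (8 * M)) / ε) :=
        (setIntegral_le_integral_div_of_sq_le (by fun_prop) hdom
          (fun x => sigmoid_ratio_sq_le _ _) (by positivity)).trans (by gcongr)
    _ = ε := by field_simp

/-- With `p/n → κ > 0`, `x ~ N(0, (1/n) I_p)`, and deterministic sequences `β(n), ξ(n)`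
with `‖β‖²/n → γ²` and `‖ξ‖²/n → γ̂²`, the family
`(1 + e^{-xᵀξ})² / (1 + e^{-xᵀβ})` is uniformly integrable. -/
theorem uniform_integrability_sigmoid_ratio (p : ℕ → ℕ) (κ : ℝ) (hκ : 0 < κ)
    (hp : Tendsto (fun n => (p n : ℝ) / n) atTop (nhds κ))
    (β ξ : (n : ℕ) → Fin (p n) → ℝ) (γ γh : ℝ)
    (hβ : Tendsto (fun n => (∑ i, (β n i) ^ 2) / n) atTop (nhds (γ ^ 2)))
    (hξ : Tendsto (fun n => (∑ i, (ξ n i) ^ 2) / n) atTop (nhds (γh ^ 2))) :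
    ∀ ε > (0 : ℝ), ∃ C : ℝ, ∀ n : ℕ,
      ∫ x in {x : Fin (p n) → ℝ |
            C ≤ (1 + Real.exp (-(∑ i, x i * ξ n i))) ^ 2
                / (1 + Real.exp (-(∑ i, x i * β n i)))},
          (1 + Real.exp (-(∑ i, x i * ξ n i))) ^ 2 / (1 + Real.exp (-(∑ i, x i * β n i)))
          ∂(Measure.pi fun _ : Fin (p n) => gaussianReal 0 (n : NNReal)⁻¹) ≤ ε :=
  uniform_integrability_sigmoid_ratio_general p β ξ γh hξ
end
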